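/- arXiv:0905.1758 — 2 statements merged into one kernel-verified Lean document; each statement's English description precedes it below -/
import Mathlib

section
/- Let A_0, A_1, A_{01} be graded commutative DGAs with DGA maps i_0 : A_0 → A_{01}, i_1 : A_1 → A_{01}, and let A = A_0 ⊕ A_1 ⊕ A_{01}[−1] be the total DGA of the diagram A_0 ⊕ A_1 → A_{01} (map (a_0, a_1) ↦ i_0(a_0) − i_1(a_1)). Define h^{1,1}(a ⊗ b) = −(a_{01}e)·(b_{01}e) for a = (a_0 + a_1 + a_{01})e, b = (b_0 + b_1 + b_{01})e in A[1]. Then for degree-zero elements x, y of A[1]: x ∪ y + y ∪ x = −d h^{1,1}(x ⊗ y) + h^{1,1}(d(x ⊗ y)), where ∪ is the Alexander-Whitney product (a_0+a_1+a_{01})∪(b_0+b_1+b_{01}) = a_0 b_0 + a_1 b_1 + (i_0(a_0) b_{01} + a_{01} i_1(b_1)). -/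
/-! A degree-zero element of `A[1]` has its `A₀`- and `A₁`-components in odd degree and its
`A₀₁`-component in even degree, so the `A₀`- and `A₁`-components of `x ∪ y + y ∪ x` vanish by
graded commutativity, while in the `A₀₁`-component all Koszul signs are `+1`: the Leibniz rule
for `d(x₀₁ y₀₁)` cancels the `d`-terms of `h¹¹ ∘ d`, and commuting the even `x₀₁, y₀₁` past
`i₀(y₀), i₁(x₁)` matches what is left with `x ∪ y + y ∪ x`. -/

section KoszulSign

variable {R : Type*} [Ring R] {a b : R} {n : ℤ}

theorem commute_of_koszul_sign_of_even (hn : Even n)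
    (h : a * b = (((-1 : ℤˣ) ^ n : ℤˣ) : ℤ) • (b * a)) : Commute a b := by
  rwa [hn.neg_one_zpow, Units.val_one, one_smul] at h

theorem mul_add_mul_comm_eq_zero_of_koszul_sign_of_odd (hn : Odd n)
    (h : a * b = (((-1 : ℤˣ) ^ n : ℤˣ) : ℤ) • (b * a)) : a * b + b * a = 0 := by
  rw [hn.neg_one_zpow, Units.val_neg, Units.val_one, neg_one_smul] at h
  rw [h, neg_add_cancel]

end KoszulSign

theorem mul_sub_mul_add_eq_of_leibniz {R : Type*} [Ring R] (d : R →+ R) {p q x₀ x₁ y₀ y₁ : R}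
    (hd : d (p * q) = d p * q + p * d q) (hy₀ : Commute y₀ p) (hx₁ : Commute q x₁) :
    x₀ * q - p * y₁ + y₀ * p - q * x₁
      = d (p * q) + (x₀ - x₁ - d p) * q + p * (y₀ - y₁ - d q) := by
  rw [hd, hy₀.eq, hx₁.eq]
  noncomm_ring

theorem stmt17_general (k B0 B1 B01 : Type*) [Field k]
    [Ring B0] [Ring B1] [Ring B01]
    [Algebra k B0] [Algebra k B1] [Algebra k B01]
    (A0g : ℤ → Submodule k B0) (A1g : ℤ → Submodule k B1)
    (A01g : ℤ → Submodule k B01)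
    -- graded commutativity
    (hgc0 : ∀ (i j : ℤ) (a b : B0), a ∈ A0g i → b ∈ A0g j →
      a * b = (((-1 : ℤˣ) ^ (i * j) : ℤˣ) : ℤ) • (b * a))
    (hgc1 : ∀ (i j : ℤ) (a b : B1), a ∈ A1g i → b ∈ A1g j →
      a * b = (((-1 : ℤˣ) ^ (i * j) : ℤˣ) : ℤ) • (b * a))
    (hgc01 : ∀ (i j : ℤ) (a b : B01), a ∈ A01g i → b ∈ A01g j →
      a * b = (((-1 : ℤˣ) ^ (i * j) : ℤˣ) : ℤ) • (b * a))
    -- differentials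
    (d01 : B01 →ₗ[k] B01)
    (hleib01 : ∀ (i : ℤ) (a b : B01), a ∈ A01g i →
      d01 (a * b) = d01 a * b + (((-1 : ℤˣ) ^ i : ℤˣ) : ℤ) • (a * d01 b))
    -- the DGA maps i₀, i₁
    (i0 : B0 →ₐ[k] B01) (i1 : B1 →ₐ[k] B01)
    (hi0g : ∀ (i : ℤ) (a : B0), a ∈ A0g i → i0 a ∈ A01g i)
    (hi1g : ∀ (i : ℤ) (a : B1), a ∈ A1g i → i1 a ∈ A01g i) :
    ∀ (x0 y0 : B0) (x1 y1 : B1) (px qy : B01),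
      x0 ∈ A0g (-1) → y0 ∈ A0g (-1) → x1 ∈ A1g (-1) → y1 ∈ A1g (-1) →
      px ∈ A01g (-2) → qy ∈ A01g (-2) →
      -- `A₀`-component of `x∪y + y∪x = −dh¹¹ + h¹¹d`:
      x0 * y0 + y0 * x0 = 0 ∧
      -- `A₁`-component:
      x1 * y1 + y1 * x1 = 0 ∧
      -- `A₀₁`-component:
      i0 x0 * qy - px * i1 y1 + i0 y0 * px - qy * i1 x1
        = d01 (px * qy) + (i0 x0 - i1 x1 - d01 px) * qy
          + px * (i0 y0 - i1 y1 - d01 qy) := by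
  intro x0 y0 x1 y1 px qy hx0 hy0 hx1 hy1 hpx hqy
  have odd_neg_one_mul_neg_one : Odd ((-1 : ℤ) * -1) := by decide
  have even_neg_one_mul_neg_two : Even ((-1 : ℤ) * -2) := by decide
  have even_neg_two_mul_neg_one : Even ((-2 : ℤ) * -1) := by decide
  have hleib : d01 (px * qy) = d01 px * qy + px * d01 qy := by
    rw [hleib01 (-2) px qy hpx, (by decide : Even (-2 : ℤ)).neg_one_zpow, Units.val_one, one_smul]
  refine ⟨mul_add_mul_comm_eq_zero_of_koszul_sign_of_odd odd_neg_one_mul_neg_one (hgc0 _ _ _ _ hx0 hy0),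
    mul_add_mul_comm_eq_zero_of_koszul_sign_of_odd odd_neg_one_mul_neg_one (hgc1 _ _ _ _ hx1 hy1), ?_⟩
  exact mul_sub_mul_add_eq_of_leibniz d01.toAddMonoidHom hleib
    (commute_of_koszul_sign_of_even even_neg_one_mul_neg_two (hgc01 _ _ _ _ (hi0g _ _ hy0) hpx))
    (commute_of_koszul_sign_of_even even_neg_two_mul_neg_one (hgc01 _ _ _ _ hqy (hi1g _ _ hx1)))

/-- Let `A₀, A₁, A₀₁` be graded commutative DGAs over a field
`k` with DGA maps `i₀ : A₀ → A₀₁`, `i₁ : A₁ → A₀₁`, and let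
`A = A₀ ⊕ A₁ ⊕ A₀₁[−1]` be the total DGA (mapping cone) of
`A₀ ⊕ A₁ → A₀₁`, `(a₀, a₁) ↦ i₀(a₀) − i₁(a₁)`, with the Alexander-Whitney
product
`(a₀+a₁+a₀₁) ∪ (b₀+b₁+b₀₁) = (a₀b₀, a₁b₁, i₀(a₀)·b₀₁ ± a₀₁·i₁(b₁))`
(Koszul signs as indicated below), and define
`h^{1,1}(a ⊗ b) = −(a₀₁e)·(b₀₁e)`.
Then for degree-zero elements `x, y` of `A[1]` (i.e. homogeneous elements
of `A` of degree `−1`, with components `x₀, x₁` of degree `−1` and shifted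
component `p = x₀₁` of degree `−2`), one has
`x ∪ y + y ∪ x = −d h^{1,1}(x ⊗ y) + h^{1,1}(d(x ⊗ y))`.
Componentwise this is the following three identities (the `A₀`- and
`A₁`-components, and the `A₀₁`-component with all signs written out). -/
theorem stmt17 (k B0 B1 B01 : Type*) [Field k]
    [Ring B0] [Ring B1] [Ring B01]
    [Algebra k B0] [Algebra k B1] [Algebra k B01]
    (A0g : ℤ → Submodule k B0) (A1g : ℤ → Submodule k B1)
    (A01g : ℤ → Submodule k B01)
    (hmul0 : ∀ (i j : ℤ) (a b : B0), a ∈ A0g i → b ∈ A0g j → a * b ∈ A0g (i + j))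
    (hmul1 : ∀ (i j : ℤ) (a b : B1), a ∈ A1g i → b ∈ A1g j → a * b ∈ A1g (i + j))
    (hmul01 : ∀ (i j : ℤ) (a b : B01), a ∈ A01g i → b ∈ A01g j → a * b ∈ A01g (i + j))
    -- graded commutativity
    (hgc0 : ∀ (i j : ℤ) (a b : B0), a ∈ A0g i → b ∈ A0g j →
      a * b = (((-1 : ℤˣ) ^ (i * j) : ℤˣ) : ℤ) • (b * a))
    (hgc1 : ∀ (i j : ℤ) (a b : B1), a ∈ A1g i → b ∈ A1g j →
      a * b = (((-1 : ℤˣ) ^ (i * j) : ℤˣ) : ℤ) • (b * a))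
    (hgc01 : ∀ (i j : ℤ) (a b : B01), a ∈ A01g i → b ∈ A01g j →
      a * b = (((-1 : ℤˣ) ^ (i * j) : ℤˣ) : ℤ) • (b * a))
    -- differentials
    (d0 : B0 →ₗ[k] B0) (d1 : B1 →ₗ[k] B1) (d01 : B01 →ₗ[k] B01)
    (hd0 : ∀ (i : ℤ) (a : B0), a ∈ A0g i → d0 a ∈ A0g (i + 1))
    (hd1 : ∀ (i : ℤ) (a : B1), a ∈ A1g i → d1 a ∈ A1g (i + 1))
    (hd01 : ∀ (i : ℤ) (a : B01), a ∈ A01g i → d01 a ∈ A01g (i + 1))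
    (hd0sq : d0 ∘ₗ d0 = 0) (hd1sq : d1 ∘ₗ d1 = 0) (hd01sq : d01 ∘ₗ d01 = 0)
    (hleib01 : ∀ (i : ℤ) (a b : B01), a ∈ A01g i →
      d01 (a * b) = d01 a * b + (((-1 : ℤˣ) ^ i : ℤˣ) : ℤ) • (a * d01 b))
    -- the DGA maps i₀, i₁
    (i0 : B0 →ₐ[k] B01) (i1 : B1 →ₐ[k] B01)
    (hi0d : ∀ a : B0, i0 (d0 a) = d01 (i0 a))
    (hi1d : ∀ a : B1, i1 (d1 a) = d01 (i1 a))
    (hi0g : ∀ (i : ℤ) (a : B0), a ∈ A0g i → i0 a ∈ A01g i)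
    (hi1g : ∀ (i : ℤ) (a : B1), a ∈ A1g i → i1 a ∈ A01g i) :
    ∀ (x0 y0 : B0) (x1 y1 : B1) (px qy : B01),
      x0 ∈ A0g (-1) → y0 ∈ A0g (-1) → x1 ∈ A1g (-1) → y1 ∈ A1g (-1) →
      px ∈ A01g (-2) → qy ∈ A01g (-2) →
      -- `A₀`-component of `x∪y + y∪x = −dh¹¹ + h¹¹d`:
      x0 * y0 + y0 * x0 = 0 ∧
      -- `A₁`-component:
      x1 * y1 + y1 * x1 = 0 ∧
      -- `A₀₁`-component:
      i0 x0 * qy - px * i1 y1 + i0 y0 * px - qy * i1 x1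
        = d01 (px * qy) + (i0 x0 - i1 x1 - d01 px) * qy
          + px * (i0 y0 - i1 y1 - d01 qy) :=
  stmt17_general k B0 B1 B01 A0g A1g A01g hgc0 hgc1 hgc01 d01 hleib01 i0 i1 hi0g hi1g
end

section
/- Let A_0, A_1, A_{01} be graded commutative DGAs with DGA maps i_0 : A_0 → A_{01}, i_1 : A_1 → A_{01}, and A the total DGA with Alexander-Whitney product. The map h^{1,1}(a ⊗ b) = −(a_{01}e)·(b_{01}e) satisfies the two derivation identities for degree-zero elements: h^{1,1}((x^{(1)} ∪ x^{(2)}) ⊗ y) = x^{(1)} ∪ h^{1,1}(x^{(2)} ⊗ y) + h^{1,1}(x^{(1)} ⊗ y) ∪ x^{(2)}, and h^{1,1}(x ⊗ (y^{(1)} ∪ y^{(2)})) = y^{(1)} ∪ h^{1,1}(x ⊗ y^{(2)}) + h^{1,1}(x ⊗ y^{(1)}) ∪ y^{(2)}. -/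
/-!
Both identities are associativity and distributivity, except for one transposition: `i₁(x₂₁)`
past `q_y` in the first and `p_x` past `i₀(y₁₀)` in the second. These factors have degrees `-1`
and `-2`, whose product is even, so graded commutativity of `A₀₁` lets them commute without
a sign.
-/

theorem commute_of_mul_eq_units_pow_smul_of_even {R : Type*} [Ring R] {a b : R} {n : ℤ}
    (h : a * b = (((-1 : ℤˣ) ^ n : ℤˣ) : ℤ) • (b * a)) (hn : Even n) : Commute a b := by
  rwa [hn.neg_one_zpow, Units.val_one, one_smul] at h

theorem neg_sub_mul_eq_of_commute {R : Type*} [Ring R] (a b p₁ p₂ q : R) (hbq : Commute b q) :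
    -((a * p₂ - p₁ * b) * q) = -(a * (p₂ * q)) + p₁ * q * b := by
  rw [sub_mul, neg_sub, mul_assoc p₁, hbq.eq, ← mul_assoc, mul_assoc a]
  abel

theorem neg_mul_sub_eq_of_commute {R : Type*} [Ring R] (a b p q₁ q₂ : R) (hpa : Commute p a) :
    -(p * (a * q₂ - q₁ * b)) = -(a * (p * q₂)) + p * q₁ * b := by
  rw [mul_sub, neg_sub, ← mul_assoc p a, hpa.eq, mul_assoc, ← mul_assoc p q₁]
  abel

theorem stmt18_general (k B0 B1 B01 : Type*) [Field k]
    [Ring B0] [Ring B1] [Ring B01]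
    [Algebra k B0] [Algebra k B1] [Algebra k B01]
    (A0g : ℤ → Submodule k B0) (A1g : ℤ → Submodule k B1)
    (A01g : ℤ → Submodule k B01)
    (hgc01 : ∀ (i j : ℤ) (a b : B01), a ∈ A01g i → b ∈ A01g j →
      a * b = (((-1 : ℤˣ) ^ (i * j) : ℤˣ) : ℤ) • (b * a))
    (i0 : B0 →ₐ[k] B01) (i1 : B1 →ₐ[k] B01)
    (hi0g : ∀ (i : ℤ) (a : B0), a ∈ A0g i → i0 a ∈ A01g i)
    (hi1g : ∀ (i : ℤ) (a : B1), a ∈ A1g i → i1 a ∈ A01g i) :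
    -- first derivation identity (A₀₁-components):
    (∀ (x10 x20 : B0) (x11 x21 : B1) (p1 p2 qy : B01),
      x10 ∈ A0g (-1) → x20 ∈ A0g (-1) → x11 ∈ A1g (-1) → x21 ∈ A1g (-1) →
      p1 ∈ A01g (-2) → p2 ∈ A01g (-2) → qy ∈ A01g (-2) →
      -((i0 x10 * p2 - p1 * i1 x21) * qy)
        = -(i0 x10 * (p2 * qy)) + (p1 * qy) * i1 x21) ∧
    -- second derivation identity (A₀₁-components):
    (∀ (x0 y10 y20 : B0) (x1 y11 y21 : B1) (px q1 q2 : B01),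
      x0 ∈ A0g (-1) → y10 ∈ A0g (-1) → y20 ∈ A0g (-1) →
      x1 ∈ A1g (-1) → y11 ∈ A1g (-1) → y21 ∈ A1g (-1) →
      px ∈ A01g (-2) → q1 ∈ A01g (-2) → q2 ∈ A01g (-2) →
      -(px * (i0 y10 * q2 - q1 * i1 y21))
        = -(i0 y10 * (px * q2)) + (px * q1) * i1 y21) := by
  have hcomm : ∀ (i j : ℤ) (a b : B01), a ∈ A01g i → b ∈ A01g j → Even (i * j) → Commute a b :=
    fun i j a b ha hb hij => commute_of_mul_eq_units_pow_smul_of_even (hgc01 i j a b ha hb) hij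
  refine ⟨fun x10 _ _ x21 p1 p2 qy _ _ _ hx21 _ _ hqy => ?_,
    fun _ y10 _ _ _ y21 px q1 q2 _ hy10 _ _ _ _ hpx _ _ => ?_⟩
  · exact neg_sub_mul_eq_of_commute _ _ _ _ _
      (hcomm (-1) (-2) _ _ (hi1g _ _ hx21) hqy ⟨1, by norm_num⟩)
  · exact neg_mul_sub_eq_of_commute _ _ _ _ _
      (hcomm (-2) (-1) _ _ hpx (hi0g _ _ hy10) ⟨1, by norm_num⟩)

/-- With the same setup as the previous statement
(`A₀, A₁, A₀₁` graded commutative DGAs with DGA maps `i₀ : A₀ → A₀₁`,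
`i₁ : A₁ → A₀₁`, and `A` the mapping-cone total DGA with the
Alexander-Whitney product), the map `h^{1,1}(a ⊗ b) = −(a₀₁e)·(b₀₁e)`
satisfies the two derivation identities for degree-zero elements of `A[1]`:
`h^{1,1}((x⁽¹⁾ ∪ x⁽²⁾) ⊗ y)
   = x⁽¹⁾ ∪ h^{1,1}(x⁽²⁾ ⊗ y) + h^{1,1}(x⁽¹⁾ ⊗ y) ∪ x⁽²⁾`
and
`h^{1,1}(x ⊗ (y⁽¹⁾ ∪ y⁽²⁾))
   = y⁽¹⁾ ∪ h^{1,1}(x ⊗ y⁽²⁾) + h^{1,1}(x ⊗ y⁽¹⁾) ∪ y⁽²⁾`.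
The `A₀`- and `A₁`-components of both sides vanish, and the
`A₀₁`-components are the two stated identities (elements of `A[1]` of
degree `0` have components `x₀, x₁` of degree `−1` and shifted component
`p = x₀₁` of degree `−2`; the product of two degree-1-slot components under
`∪` is computed via `i₀(x₀)·y₀₁ ± x₀₁·i₁(y₁)`). -/
theorem stmt18 (k B0 B1 B01 : Type*) [Field k]
    [Ring B0] [Ring B1] [Ring B01]
    [Algebra k B0] [Algebra k B1] [Algebra k B01]
    (A0g : ℤ → Submodule k B0) (A1g : ℤ → Submodule k B1)
    (A01g : ℤ → Submodule k B01)
    (hmul0 : ∀ (i j : ℤ) (a b : B0), a ∈ A0g i → b ∈ A0g j → a * b ∈ A0g (i + j))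
    (hmul1 : ∀ (i j : ℤ) (a b : B1), a ∈ A1g i → b ∈ A1g j → a * b ∈ A1g (i + j))
    (hmul01 : ∀ (i j : ℤ) (a b : B01), a ∈ A01g i → b ∈ A01g j → a * b ∈ A01g (i + j))
    (hgc0 : ∀ (i j : ℤ) (a b : B0), a ∈ A0g i → b ∈ A0g j →
      a * b = (((-1 : ℤˣ) ^ (i * j) : ℤˣ) : ℤ) • (b * a))
    (hgc1 : ∀ (i j : ℤ) (a b : B1), a ∈ A1g i → b ∈ A1g j →
      a * b = (((-1 : ℤˣ) ^ (i * j) : ℤˣ) : ℤ) • (b * a))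
    (hgc01 : ∀ (i j : ℤ) (a b : B01), a ∈ A01g i → b ∈ A01g j →
      a * b = (((-1 : ℤˣ) ^ (i * j) : ℤˣ) : ℤ) • (b * a))
    (i0 : B0 →ₐ[k] B01) (i1 : B1 →ₐ[k] B01)
    (hi0g : ∀ (i : ℤ) (a : B0), a ∈ A0g i → i0 a ∈ A01g i)
    (hi1g : ∀ (i : ℤ) (a : B1), a ∈ A1g i → i1 a ∈ A01g i) :
    -- first derivation identity (A₀₁-components):
    (∀ (x10 x20 : B0) (x11 x21 : B1) (p1 p2 qy : B01),
      x10 ∈ A0g (-1) → x20 ∈ A0g (-1) → x11 ∈ A1g (-1) → x21 ∈ A1g (-1) →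
      p1 ∈ A01g (-2) → p2 ∈ A01g (-2) → qy ∈ A01g (-2) →
      -((i0 x10 * p2 - p1 * i1 x21) * qy)
        = -(i0 x10 * (p2 * qy)) + (p1 * qy) * i1 x21) ∧
    -- second derivation identity (A₀₁-components):
    (∀ (x0 y10 y20 : B0) (x1 y11 y21 : B1) (px q1 q2 : B01),
      x0 ∈ A0g (-1) → y10 ∈ A0g (-1) → y20 ∈ A0g (-1) →
      x1 ∈ A1g (-1) → y11 ∈ A1g (-1) → y21 ∈ A1g (-1) →
      px ∈ A01g (-2) → q1 ∈ A01g (-2) → q2 ∈ A01g (-2) →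
      -(px * (i0 y10 * q2 - q1 * i1 y21))
        = -(i0 y10 * (px * q2)) + (px * q1) * i1 y21) :=
  stmt18_general k B0 B1 B01 A0g A1g A01g hgc01 i0 i1 hi0g hi1g
end
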